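/- arXiv:2306.14878 — 2 statements merged into one kernel-verified Lean document; each statement's English description precedes it below -/
import Mathlib

section
/- Let d ≥ 1, let x, y ∈ ℝ^d with x ≠ y, let σ > 0, and set r = ‖x − y‖/(2σ). Then the total variation distance between the Gaussian measures N(x, σ²I_d) and N(y, σ²I_d) on ℝ^d is at most 1 − (2r/(r² + 1)) · (1/√(2π)) · e^{−r²/2}. -/
open MeasureTheory ProbabilityTheory Real Set

/-- Total variation distance `TV(μ,ν) = sup_{A measurable} |μ(A) − ν(A)|`. -/
noncomputable def tvDist {α : Type*} [MeasurableSpace α] (μ ν : Measure α) : ℝ :=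
  ⨆ s : {s : Set α // MeasurableSet s}, |(μ s.1).toReal - (ν s.1).toReal|

/-- Gaussian measure `N(m, v·I_d)` on `ℝ^d` (`v` a real variance, clamped at `0`). -/
noncomputable def gaussianE (d : ℕ) (m : EuclideanSpace ℝ (Fin d)) (v : ℝ) :
    Measure (EuclideanSpace ℝ (Fin d)) :=
  (Measure.pi fun i => gaussianReal (m i) v.toNNReal).map
    (MeasurableEquiv.toLp 2 (Fin d → ℝ))

open scoped ENNReal NNReal RealInnerProductSpace

lemma lintegral_pi_prod {n : ℕ} (μ : Fin n → Measure ℝ) [∀ i, SigmaFinite (μ i)]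
    (g : Fin n → ℝ → ℝ≥0∞) (hg : ∀ i, Measurable (g i)) :
    ∫⁻ w, ∏ i, g i (w i) ∂Measure.pi μ = ∏ i, ∫⁻ t, g i t ∂μ i := by
  induction n with
  | zero => simp [Measure.pi_of_empty]
  | succ n ih =>
    have h := (measurePreserving_piFinSuccAbove μ 0).symm
    have hmeas : Measurable fun w : Fin (n+1) → ℝ => ∏ i, g i (w i) :=
      Finset.measurable_prod _ fun i _ => (hg i).comp (measurable_pi_apply i)
    have hmeas2 : Measurable fun w : Fin n → ℝ => ∏ i : Fin n, g i.succ (w i) :=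
      Finset.measurable_prod _ fun i _ => (hg i.succ).comp (measurable_pi_apply i)
    rw [← h.lintegral_comp hmeas]
    simp_rw [MeasurableEquiv.piFinSuccAbove_symm_apply, Fin.insertNthEquiv,
      Fin.prod_univ_succ, Fin.insertNth_zero, Equiv.coe_fn_mk, Fin.cons_succ,
      Fin.zero_succAbove, Fin.cons_zero, cast_eq]
    rw [lintegral_prod_mul (f := g 0) (g := fun w : Fin n → ℝ => ∏ i : Fin n, g i.succ (w i))
      (hg 0).aemeasurable hmeas2.aemeasurable]
    rw [ih (fun i => μ i.succ) (fun i => g i.succ) (fun i => hg i.succ)]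

lemma pi_gaussianReal_eq {d : ℕ} (m : Fin d → ℝ) {v : ℝ≥0} (hv : v ≠ 0) :
    Measure.pi (fun i => gaussianReal (m i) v) =
      (Measure.pi fun _ : Fin d => (volume : Measure ℝ)).withDensity
        (fun w => ∏ i, gaussianPDF (m i) v (w i)) := by
  refine Measure.pi_eq (μ := fun i => gaussianReal (m i) v) fun s hs => ?_
  have key : ∀ w : Fin d → ℝ, (Set.univ.pi s).indicator
      (fun w => ∏ i, gaussianPDF (m i) v (w i)) w
      = ∏ i, (s i).indicator (gaussianPDF (m i) v) (w i) := by
    intro w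
    by_cases hw : w ∈ Set.univ.pi s
    · rw [Set.indicator_of_mem hw]
      refine Finset.prod_congr rfl fun i _ => ?_
      rw [Set.indicator_of_mem (hw i (Set.mem_univ i))]
    · rw [Set.indicator_of_notMem hw]
      rw [Set.mem_univ_pi] at hw
      push_neg at hw
      obtain ⟨i, hi⟩ := hw
      exact (Finset.prod_eq_zero (Finset.mem_univ i)
        (by rw [Set.indicator_of_notMem hi])).symm
  rw [withDensity_apply _ (MeasurableSet.univ_pi hs)]
  have step : (∫⁻ a in Set.univ.pi s, ∏ i, gaussianPDF (m i) v (a i)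
        ∂(Measure.pi fun _ : Fin d => (volume : Measure ℝ)))
      = ∫⁻ a, ∏ i, (s i).indicator (gaussianPDF (m i) v) (a i)
        ∂(Measure.pi fun _ : Fin d => (volume : Measure ℝ)) :=
    (lintegral_indicator (MeasurableSet.univ_pi hs) _).symm.trans (lintegral_congr key)
  rw [step, lintegral_pi_prod _ _ (fun i => (measurable_gaussianPDF _ _).indicator (hs i))]
  refine Finset.prod_congr rfl fun i _ => ?_
  show _ = gaussianReal (m i) v (s i)
  rw [gaussianReal_of_var_ne_zero _ hv, withDensity_apply _ (hs i),
    ← lintegral_indicator (hs i) _]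

lemma map_withDensity_equiv {α β : Type*} [MeasurableSpace α] [MeasurableSpace β]
    (μ : Measure α) (e : α ≃ᵐ β) (f : β → ℝ≥0∞) (hf : Measurable f) :
    (μ.withDensity (fun a => f (e a))).map e = (μ.map e).withDensity f := by
  ext s hs
  rw [Measure.map_apply e.measurable hs, withDensity_apply _ hs,
    withDensity_apply _ (e.measurable hs),
    setLIntegral_map hs hf e.measurable]

lemma prod_gaussianPDF_eq {d : ℕ} (m : EuclideanSpace ℝ (Fin d)) (v : ℝ≥0) (z : EuclideanSpace ℝ (Fin d)) :
    ∏ i, gaussianPDF (m i) v (z i) =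
      ENNReal.ofReal ((Real.sqrt (2 * π * v))⁻¹ ^ d * Real.exp (-‖z - m‖ ^ 2 / (2 * v))) := by
  have hnn : ∀ i ∈ Finset.univ, 0 ≤ gaussianPDFReal (m i) v (z i) :=
    fun i _ => gaussianPDFReal_nonneg _ _ _
  simp_rw [gaussianPDF_def]
  rw [← ENNReal.ofReal_prod_of_nonneg hnn]
  congr 1
  simp_rw [gaussianPDFReal_def]
  rw [Finset.prod_mul_distrib, Finset.prod_const, ← Real.exp_sum]
  congr 2
  · simp
  have hz : ‖z - m‖ ^ 2 = ∑ i, (z i - m i) ^ 2 := by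
    rw [EuclideanSpace.norm_eq]
    rw [Real.sq_sqrt (by positivity)]
    refine Finset.sum_congr rfl fun i _ => ?_
    simp [Real.norm_eq_abs, sq_abs]
  rw [hz]
  simp [neg_div, Finset.sum_div, Finset.sum_neg_distrib]

lemma measurable_gaussDensE {d : ℕ} (m : EuclideanSpace ℝ (Fin d)) (c v : ℝ) :
    Measurable (fun z : EuclideanSpace ℝ (Fin d) =>
      ENNReal.ofReal (c ^ d * Real.exp (-‖z - m‖ ^ 2 / (2 * v)))) := by
  refine ENNReal.measurable_ofReal.comp ?_
  have : Continuous fun z : EuclideanSpace ℝ (Fin d) =>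
      c ^ d * Real.exp (-‖z - m‖ ^ 2 / (2 * v)) := by
    fun_prop
  exact this.measurable

lemma gaussianE_eq_withDensity {d : ℕ} (m : EuclideanSpace ℝ (Fin d)) {v : ℝ} (hv : 0 < v) :
    gaussianE d m v = (volume : Measure (EuclideanSpace ℝ (Fin d))).withDensity
      (fun z => ENNReal.ofReal ((Real.sqrt (2 * π * v))⁻¹ ^ d
        * Real.exp (-‖z - m‖ ^ 2 / (2 * v)))) := by
  have hv' : v.toNNReal ≠ 0 := by
    simp only [ne_eq, Real.toNNReal_eq_zero, not_le]
    exact hv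
  have hcoe : ((v.toNNReal : ℝ)) = v := Real.coe_toNNReal v hv.le
  have hfun : (fun w : Fin d → ℝ => ∏ i, gaussianPDF (m i) v.toNNReal (w i)) =
      fun w => ENNReal.ofReal ((Real.sqrt (2 * π * v))⁻¹ ^ d
        * Real.exp (-‖(MeasurableEquiv.toLp 2 (Fin d → ℝ)) w - m‖ ^ 2 / (2 * v))) := by
    funext w
    have := prod_gaussianPDF_eq m v.toNNReal ((MeasurableEquiv.toLp 2 (Fin d → ℝ)) w)
    rw [hcoe] at this
    exact this
  rw [gaussianE, pi_gaussianReal_eq _ hv', hfun,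
    map_withDensity_equiv _ (MeasurableEquiv.toLp 2 (Fin d → ℝ)) _
      (measurable_gaussDensE m _ v), ← volume_pi,
    ← MeasurableEquiv.symm_symm (MeasurableEquiv.toLp 2 (Fin d → ℝ)),
    ((EuclideanSpace.volume_preserving_symm_measurableEquiv_toLp (Fin d)).symm _).map_eq]

open scoped RealInnerProductSpace in
lemma gaussianE_inner_apply {d : ℕ} [NeZero d] (m u : EuclideanSpace ℝ (Fin d))
    (hu : ‖u‖ = 1) {v : ℝ} (hv : 0 < v) {S : Set ℝ} (hS : MeasurableSet S) :
    gaussianE d m v {z | ⟪z - m, u⟫ ∈ S} = gaussianReal 0 v.toNNReal S := by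
  classical
  have hv' : v.toNNReal ≠ 0 := by
    simp only [ne_eq, Real.toNNReal_eq_zero, not_le]; exact hv
  -- an orthonormal basis with `b 0 = u`
  have hcard : Module.finrank ℝ (EuclideanSpace ℝ (Fin d)) = Fintype.card (Fin d) := by
    simp [finrank_euclideanSpace]
  have horth : Orthonormal ℝ (Set.restrict {0} (fun _ : Fin d => u)) := by
    constructor
    · intro i; exact hu
    · intro i j hij
      exact absurd (Subtype.ext ((Set.mem_singleton_iff.mp i.2).trans
        (Set.mem_singleton_iff.mp j.2).symm)) hij
  obtain ⟨b, hb⟩ := Orthonormal.exists_orthonormalBasis_extension_of_card_eq hcard horth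
  have hb0 : b 0 = u := hb 0 (Set.mem_singleton 0)
  -- the measure-preserving change of variables
  let T : EuclideanSpace ℝ (Fin d) ≃ᵐ EuclideanSpace ℝ (Fin d) :=
    (b.repr.symm.toHomeomorph.trans (Homeomorph.addLeft m)).toMeasurableEquiv
  have hT : ∀ w, T w = m + b.repr.symm w := fun w => rfl
  have hTmp : MeasurePreserving T volume volume := by
    have h1 := b.measurePreserving_repr_symm
    have h2 := measurePreserving_add_left (volume : Measure (EuclideanSpace ℝ (Fin d))) m
    exact h2.comp h1
  -- measurability of the sets involved
  have hcont : Continuous fun z : EuclideanSpace ℝ (Fin d) => (inner ℝ (z - m) u : ℝ) :=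
    Continuous.inner (continuous_id.sub continuous_const) continuous_const
  have hSet : MeasurableSet {z : EuclideanSpace ℝ (Fin d) | ⟪z - m, u⟫ ∈ S} :=
    hcont.measurable hS
  have hcoord : Measurable fun w : EuclideanSpace ℝ (Fin d) => w 0 :=
    (measurable_pi_apply 0).comp (MeasurableEquiv.toLp 2 (Fin d → ℝ)).symm.measurable
  have hcyl : MeasurableSet {w : EuclideanSpace ℝ (Fin d) | w 0 ∈ S} := hcoord hS
  -- preimage of the halfspace-type set under `T`
  have hpre : ⇑T ⁻¹' {z | ⟪z - m, u⟫ ∈ S} = {w | w 0 ∈ S} := by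
    ext w
    simp only [Set.mem_preimage, Set.mem_setOf_eq, hT]
    have : (⟪m + b.repr.symm w - m, u⟫ : ℝ) = w 0 := by
      rw [add_sub_cancel_left, ← hb0, real_inner_comm, ← b.repr_apply_apply,
        LinearIsometryEquiv.apply_symm_apply]
    rw [this]
  -- change variables
  rw [gaussianE_eq_withDensity m hv, withDensity_apply _ hSet]
  have hchg := hTmp.setLIntegral_comp_preimage_emb T.measurableEmbedding
    (fun z => ENNReal.ofReal ((Real.sqrt (2 * π * v))⁻¹ ^ d
      * Real.exp (-‖z - m‖ ^ 2 / (2 * v)))) {z | ⟪z - m, u⟫ ∈ S}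
  rw [← hchg, hpre]
  have hFT : ∀ w : EuclideanSpace ℝ (Fin d),
      ENNReal.ofReal ((Real.sqrt (2 * π * v))⁻¹ ^ d * Real.exp (-‖T w - m‖ ^ 2 / (2 * v)))
      = ENNReal.ofReal ((Real.sqrt (2 * π * v))⁻¹ ^ d
          * Real.exp (-‖w - 0‖ ^ 2 / (2 * v))) := by
    intro w
    rw [hT, add_sub_cancel_left, LinearIsometryEquiv.norm_map, sub_zero]
  calc (∫⁻ w in {w : EuclideanSpace ℝ (Fin d) | w 0 ∈ S},
        ENNReal.ofReal ((Real.sqrt (2 * π * v))⁻¹ ^ d * Real.exp (-‖T w - m‖ ^ 2 / (2 * v)))) 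
      = ∫⁻ w in {w : EuclideanSpace ℝ (Fin d) | w 0 ∈ S},
        ENNReal.ofReal ((Real.sqrt (2 * π * v))⁻¹ ^ d * Real.exp (-‖w - 0‖ ^ 2 / (2 * v))) := by
        exact lintegral_congr fun w => hFT w
    _ = gaussianE d 0 v {w | w 0 ∈ S} := by
        rw [gaussianE_eq_withDensity 0 hv, withDensity_apply _ hcyl]
    _ = gaussianReal 0 v.toNNReal S := by
        rw [gaussianE, Measure.map_apply (MeasurableEquiv.measurable _) hcyl]
        have hpre2 : ⇑(MeasurableEquiv.toLp 2 (Fin d → ℝ)) ⁻¹'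
            {w : EuclideanSpace ℝ (Fin d) | w 0 ∈ S}
            = Set.univ.pi (fun i : Fin d => if i = 0 then S else Set.univ) := by
          ext w
          simp only [Set.mem_preimage, Set.mem_setOf_eq, Set.mem_univ_pi]
          constructor
          · intro hw i
            by_cases hi : i = 0
            · subst hi; simpa using hw
            · simp [hi]
          · intro hw
            have := hw 0
            simpa using this
        rw [hpre2, Measure.pi_pi]
        have : ∀ i : Fin d, gaussianReal ((0 : EuclideanSpace ℝ (Fin d)) i) v.toNNReal
            (if i = 0 then S else Set.univ)
            = if i = 0 then gaussianReal 0 v.toNNReal S else 1 := by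
          intro i
          by_cases hi : i = 0 <;> simp [hi]
        simp_rw [this]
        rw [Finset.prod_ite_eq' Finset.univ (0 : Fin d)
          (fun _ => gaussianReal 0 v.toNNReal S)]
        simp

lemma gaussianReal_scaling {σ : ℝ} (hσ : 0 < σ) (r : ℝ) :
    gaussianReal 0 (σ ^ 2).toNNReal (Ici (σ * r)) = gaussianReal 0 1 (Ici r) := by
  have h := gaussianReal_map_const_mul (μ := 0) (v := 1) σ
  have hv : (NNReal.mk (σ ^ 2) (sq_nonneg _) * 1 : ℝ≥0) = (σ ^ 2).toNNReal := by
    ext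
    simp [Real.coe_toNNReal _ (sq_nonneg σ)]
  rw [hv, mul_zero] at h
  rw [← h, Measure.map_apply (measurable_id'.const_mul σ) measurableSet_Ici]
  congr 1
  ext t
  simp only [Set.mem_preimage, Set.mem_Ici]
  exact ⟨fun ht => le_of_mul_le_mul_left ht hσ, fun ht => by nlinarith⟩

lemma stdGaussian_tail_lb {r : ℝ} (hr : 0 < r) :
    r / (r ^ 2 + 1) * ((Real.sqrt (2 * π))⁻¹ * Real.exp (-r ^ 2 / 2))
      ≤ (gaussianReal 0 1 (Ici r)).toReal := by
  classical
  set c : ℝ := (Real.sqrt (2 * π))⁻¹ with hc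
  have hcpos : 0 < c := by
    rw [hc]
    positivity
  set φ : ℝ → ℝ := fun t => c * Real.exp (-t ^ 2 / 2) with hφ
  have hφpos : ∀ t, 0 < φ t := fun t => by positivity
  -- the tail as an integral of φ
  have hpdf : ∀ t, gaussianPDFReal 0 1 t = φ t := by
    intro t
    rw [gaussianPDFReal_def]
    norm_num [hφ, hc]
  have happly := gaussianReal_apply_eq_integral 0 one_ne_zero (Ici r)
  have hint0 : Integrable φ := by
    have : Integrable (fun t : ℝ => Real.exp (-(2⁻¹ : ℝ) * t ^ 2)) :=
      integrable_exp_neg_mul_sq (by norm_num)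
    have h2 : φ = fun t => c * Real.exp (-(2⁻¹ : ℝ) * t ^ 2) := by
      funext t
      rw [hφ]
      ring_nf
    rw [h2]
    exact this.const_mul c
  -- the comparison integrand ψ and the potential g
  set ψ : ℝ → ℝ := fun t => φ t * (1 - 2 / (1 + t ^ 2) ^ 2) with hψ
  set g : ℝ → ℝ := fun t => t / (t ^ 2 + 1) * φ t with hg
  have hplus : ∀ t : ℝ, (0:ℝ) < 1 + t ^ 2 := fun t => by positivity
  have hψmeas : Continuous ψ := by
    apply Continuous.mul
    · exact continuous_const.mul (Real.continuous_exp.comp (by fun_prop))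
    · apply Continuous.sub continuous_const
      apply Continuous.div continuous_const (by fun_prop)
      intro t
      exact ne_of_gt (by positivity)
  have hψle : ∀ t, ψ t ≤ φ t := by
    intro t
    rw [hψ]
    have h1 : 0 < 2 / (1 + t ^ 2) ^ 2 := by positivity
    nlinarith [hφpos t]
  have hψabs : ∀ t, |ψ t| ≤ φ t := by
    intro t
    rw [hψ, abs_mul, abs_of_pos (hφpos t)]
    have h1 : (1 + t ^ 2) ^ 2 ≥ 1 := by nlinarith [sq_nonneg t]
    have h2 : 2 / (1 + t ^ 2) ^ 2 ≤ 2 := by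
      rw [div_le_iff₀ (by positivity)]
      nlinarith
    have h3 : 0 < 2 / (1 + t ^ 2) ^ 2 := by positivity
    have : |1 - 2 / (1 + t ^ 2) ^ 2| ≤ 1 := by
      rw [abs_le]
      constructor <;> nlinarith
    nlinarith [abs_nonneg (1 - 2 / (1 + t ^ 2) ^ 2), hφpos t]
  have hψint : Integrable ψ := by
    refine hint0.mono hψmeas.aestronglyMeasurable ?_
    filter_upwards with t
    rw [Real.norm_eq_abs, Real.norm_eq_abs, abs_of_pos (hφpos t)]
    exact hψabs t
  -- derivative of g
  have hderiv : ∀ t : ℝ, HasDerivAt g (-ψ t) t := by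
    intro t
    have h1 : HasDerivAt (fun t : ℝ => t / (t ^ 2 + 1))
        ((1 * (t ^ 2 + 1) - t * (2 * t)) / (t ^ 2 + 1) ^ 2) t := by
      have h1' : HasDerivAt (fun x : ℝ => x ^ 2 + 1) (2 * t) t := by
        simpa using (hasDerivAt_pow 2 t).add_const 1
      exact (hasDerivAt_id t).div h1' (by positivity)
    have h2 : HasDerivAt (fun t : ℝ => -t ^ 2 / 2) (-t) t := by
      have := ((hasDerivAt_pow 2 t).neg).div_const 2
      exact this.congr_deriv (by norm_num; ring)
    have h3 : HasDerivAt φ (c * (Real.exp (-t ^ 2 / 2) * (-t))) t := by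
      exact ((h2.exp).const_mul c)
    have := h1.mul h3
    refine this.congr_deriv (Eq.symm ?_)
    rw [hψ, hφ]
    have h4 : (1 + t ^ 2) ≠ 0 := ne_of_gt (hplus t)
    have h5 : (t ^ 2 + 1) ≠ 0 := by rw [add_comm] at h4; exact h4
    field_simp
    ring
  -- limit of g at infinity
  have hgtend : Filter.Tendsto g Filter.atTop (nhds 0) := by
    have hφtend : Filter.Tendsto φ Filter.atTop (nhds 0) := by
      have h1 : Filter.Tendsto (fun t : ℝ => -t ^ 2 / 2) Filter.atTop Filter.atBot := by
        apply Filter.Tendsto.atBot_div_const (by norm_num : (0:ℝ) < 2)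
        exact Filter.tendsto_neg_atBot_iff.mpr (Filter.tendsto_pow_atTop two_ne_zero)
      have := Real.tendsto_exp_atBot.comp h1
      have h2 := this.const_mul c
      simpa using h2
    apply squeeze_zero' (Filter.eventually_atTop.mpr ⟨0, fun t ht => ?_⟩)
      (Filter.eventually_atTop.mpr ⟨0, fun t ht => ?_⟩) hφtend
    · rw [hg]
      have := hφpos t
      positivity
    · rw [hg]
      have h1 : t / (t ^ 2 + 1) ≤ 1 := by
        rw [div_le_one (by positivity)]
        nlinarith
      nlinarith [hφpos t, div_nonneg ht (le_of_lt (by positivity : (0:ℝ) < t ^ 2 + 1))]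
  -- FTC on [r, ∞)
  have hFTC : ∫ t in Ioi r, (-ψ t) = 0 - g r :=
    integral_Ioi_of_hasDerivAt_of_tendsto' (fun t _ => hderiv t)
      (hψint.neg.integrableOn) hgtend
  rw [integral_neg] at hFTC
  have hψeq : ∫ t in Ioi r, ψ t = g r := by linarith
  -- compare
  have hcomp : ∫ t in Ioi r, ψ t ≤ ∫ t in Ioi r, φ t :=
    setIntegral_mono (hψint.integrableOn) (hint0.integrableOn) hψle
  -- put everything together
  rw [happly]
  have hInonneg : 0 ≤ ∫ t in Ici r, gaussianPDFReal 0 1 t :=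
    integral_nonneg fun t => gaussianPDFReal_nonneg _ _ _
  rw [ENNReal.toReal_ofReal hInonneg]
  have hIci : ∫ t in Ici r, gaussianPDFReal 0 1 t = ∫ t in Ioi r, φ t := by
    rw [integral_Ici_eq_integral_Ioi]
    exact integral_congr_ae (Filter.Eventually.of_forall fun t => hpdf t)
  rw [hIci]
  calc r / (r ^ 2 + 1) * (c * Real.exp (-r ^ 2 / 2)) = g r := by rw [hg, hφ]
    _ = ∫ t in Ioi r, ψ t := hψeq.symm
    _ ≤ ∫ t in Ioi r, φ t := hcomp

lemma gaussianReal_Ioi_eq_Ici {v : ℝ≥0} (hv : v ≠ 0) (a : ℝ) :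
    gaussianReal 0 v (Ioi a) = gaussianReal 0 v (Ici a) := by
  have hsingleton : gaussianReal 0 v {a} = 0 := by
    rw [gaussianReal_of_var_ne_zero _ hv, withDensity_apply _ (measurableSet_singleton a)]
    exact setLIntegral_measure_zero _ _ (Real.volume_singleton)
  refine le_antisymm (measure_mono Ioi_subset_Ici_self) ?_
  calc gaussianReal 0 v (Ici a) = gaussianReal 0 v ({a} ∪ Ioi a) := by
        rw [Set.singleton_union, Set.Ioi_insert]
    _ ≤ gaussianReal 0 v {a} + gaussianReal 0 v (Ioi a) := measure_union_le _ _
    _ = gaussianReal 0 v (Ioi a) := by rw [hsingleton, zero_add]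

lemma gaussianReal_Iio_neg_eq_Ici {v : ℝ≥0} (hv : v ≠ 0) (a : ℝ) :
    gaussianReal 0 v (Iio (-a)) = gaussianReal 0 v (Ici a) := by
  have h := gaussianReal_map_const_mul (μ := 0) (v := v) (-1)
  have hone : (NNReal.mk ((-1 : ℝ)^2) (sq_nonneg _) * v : ℝ≥0) = v := by
    ext; norm_num
  rw [hone, mul_zero] at h
  have hpre : ((-1 : ℝ) * ·) ⁻¹' (Iio (-a)) = Ioi a := by
    ext t
    simp only [Set.mem_preimage, Set.mem_Iio, Set.mem_Ioi]
    constructor <;> intro ht <;> nlinarith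
  calc gaussianReal 0 v (Iio (-a)) = ((gaussianReal 0 v).map ((-1 : ℝ) * ·)) (Iio (-a)) := by
        rw [h]
    _ = gaussianReal 0 v (Ioi a) := by
        rw [Measure.map_apply (measurable_id'.const_mul _) measurableSet_Iio, hpre]
    _ = gaussianReal 0 v (Ici a) := gaussianReal_Ioi_eq_Ici hv a

lemma tv_bound_aux {α : Type*} [MeasurableSpace α] (μ ν : Measure α)
    [IsProbabilityMeasure μ] [IsProbabilityMeasure ν] (H : Set α) (hH : MeasurableSet H)
    (hle : ∀ A : Set α, MeasurableSet A → A ⊆ H → μ A ≤ ν A)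
    (hge : ∀ A : Set α, MeasurableSet A → A ⊆ Hᶜ → ν A ≤ μ A)
    (A : Set α) (hA : MeasurableSet A) :
    (μ A).toReal - (ν A).toReal ≤ 1 - ((μ H).toReal + (ν Hᶜ).toReal) := by
  have c1 : μ H ≤ μ (Aᶜ ∩ H) + ν (A ∩ H) := by
    calc μ H = μ (H ∩ Aᶜ) + μ (H \ Aᶜ) := (measure_inter_add_diff H hA.compl).symm
      _ = μ (Aᶜ ∩ H) + μ (A ∩ H) := by
          rw [Set.inter_comm H Aᶜ, Set.diff_eq, compl_compl, Set.inter_comm H A]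
      _ ≤ μ (Aᶜ ∩ H) + ν (A ∩ H) := by
          exact add_le_add le_rfl (hle _ (hA.inter hH) Set.inter_subset_right)
  have c2 : ν Hᶜ ≤ μ (Aᶜ ∩ Hᶜ) + ν (A ∩ Hᶜ) := by
    calc ν Hᶜ = ν (Hᶜ ∩ Aᶜ) + ν (Hᶜ \ Aᶜ) := (measure_inter_add_diff Hᶜ hA.compl).symm
      _ = ν (Aᶜ ∩ Hᶜ) + ν (A ∩ Hᶜ) := by
          rw [Set.inter_comm Hᶜ Aᶜ, Set.diff_eq, compl_compl, Set.inter_comm Hᶜ A]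
      _ ≤ μ (Aᶜ ∩ Hᶜ) + ν (A ∩ Hᶜ) := by
          exact add_le_add (hge _ (hA.compl.inter hH.compl) Set.inter_subset_right) le_rfl
  have c3 : μ Aᶜ = μ (Aᶜ ∩ H) + μ (Aᶜ ∩ Hᶜ) := by
    rw [← measure_inter_add_diff Aᶜ hH, Set.diff_eq]
  have c4 : ν A = ν (A ∩ H) + ν (A ∩ Hᶜ) := by
    rw [← measure_inter_add_diff A hH, Set.diff_eq]
  have key : μ H + ν Hᶜ ≤ μ Aᶜ + ν A := by
    calc μ H + ν Hᶜ ≤ (μ (Aᶜ ∩ H) + ν (A ∩ H)) + (μ (Aᶜ ∩ Hᶜ) + ν (A ∩ Hᶜ)) :=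
          add_le_add c1 c2
      _ = μ Aᶜ + ν A := by rw [c3, c4]; ring
  have hcompl : μ A + μ Aᶜ = 1 := by
    rw [measure_add_measure_compl hA, measure_univ]
  -- convert to real numbers
  have f1 : (μ H).toReal + (ν Hᶜ).toReal ≤ (μ Aᶜ).toReal + (ν A).toReal := by
    rw [← ENNReal.toReal_add (measure_ne_top _ _) (measure_ne_top _ _),
      ← ENNReal.toReal_add (measure_ne_top _ _) (measure_ne_top _ _)]
    exact ENNReal.toReal_mono (by finiteness) key
  have f2 : (μ A).toReal + (μ Aᶜ).toReal = 1 := by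
    rw [← ENNReal.toReal_add (measure_ne_top _ _) (measure_ne_top _ _), hcompl]
    simp
  linarith

/-- For `x ≠ y` and `r = ‖x − y‖/(2σ)`,
`TV(N(x, σ²I_d), N(y, σ²I_d)) ≤ 1 − (2r/(r² + 1)) · (1/√(2π)) · e^{−r²/2}`. -/
theorem tvDist_gaussianE_le (d : ℕ) (hd : 1 ≤ d) (x y : EuclideanSpace ℝ (Fin d))
    (hxy : x ≠ y) (σ : ℝ) (hσ : 0 < σ) (r : ℝ) (hr : r = ‖x - y‖ / (2 * σ)) :
    tvDist (gaussianE d x (σ ^ 2)) (gaussianE d y (σ ^ 2)) ≤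
      1 - (2 * r / (r ^ 2 + 1)) * (1 / Real.sqrt (2 * Real.pi)) * Real.exp (-r ^ 2 / 2) := by
  haveI : NeZero d := ⟨by omega⟩
  have hv : (0:ℝ) < σ ^ 2 := by positivity
  have hv' : (σ ^ 2).toNNReal ≠ 0 := by
    simp only [ne_eq, Real.toNNReal_eq_zero, not_le]; exact hv
  have hyx0 : y - x ≠ 0 := sub_ne_zero.mpr (Ne.symm hxy)
  have hnorm : (0:ℝ) < ‖y - x‖ := norm_pos_iff.mpr hyx0
  set n : ℝ := ‖y - x‖ with hn
  set u : EuclideanSpace ℝ (Fin d) := n⁻¹ • (y - x) with hu_def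
  have hu : ‖u‖ = 1 := by
    rw [hu_def, norm_smul, norm_inv, Real.norm_eq_abs, abs_of_pos hnorm, ← hn,
      inv_mul_cancel₀ (ne_of_gt hnorm)]
  set α : ℝ := n / 2 with hα_def
  have hxy_norm : ‖x - y‖ = n := by rw [hn, norm_sub_rev]
  have hα : α = σ * r := by
    rw [hα_def, hr, hxy_norm]
    field_simp
  have hrpos : 0 < r := by
    rw [hr, hxy_norm]
    positivity
  set μ := gaussianE d x (σ ^ 2) with hμ_def
  set ν := gaussianE d y (σ ^ 2) with hν_def
  haveI hprob : ∀ m : EuclideanSpace ℝ (Fin d), IsProbabilityMeasure (gaussianE d m (σ^2)) := by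
    intro m
    rw [gaussianE]
    exact Measure.isProbabilityMeasure_map (MeasurableEquiv.measurable _).aemeasurable
  haveI : IsProbabilityMeasure μ := hprob x
  haveI : IsProbabilityMeasure ν := hprob y
  -- inner product identities
  have hinner : ∀ z : EuclideanSpace ℝ (Fin d), ⟪z - x, y - x⟫ = n * ⟪z - x, u⟫ := by
    intro z
    rw [hu_def, real_inner_smul_right, ← mul_assoc, mul_inv_cancel₀ (ne_of_gt hnorm), one_mul]
  have hkey : ∀ z : EuclideanSpace ℝ (Fin d),
      ‖z - y‖ ^ 2 = ‖z - x‖ ^ 2 - 2 * (n * ⟪z - x, u⟫) + n ^ 2 := by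
    intro z
    have h := norm_sub_sq_real (z - x) (y - x)
    rw [sub_sub_sub_cancel_right] at h
    rw [h, hinner z]
  -- the separating halfspace
  set H : Set (EuclideanSpace ℝ (Fin d)) := {z | ⟪z - x, u⟫ ∈ Ici α} with hH_def
  have hHmeas : MeasurableSet H :=
    (Continuous.inner (continuous_id.sub continuous_const) continuous_const).measurable
      measurableSet_Ici
  -- density comparisons
  have hcmp : ∀ A : Set (EuclideanSpace ℝ (Fin d)), MeasurableSet A → A ⊆ H → μ A ≤ ν A := by
    intro A hA hAH
    rw [hμ_def, hν_def, gaussianE_eq_withDensity x hv, gaussianE_eq_withDensity y hv,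
      withDensity_apply _ hA, withDensity_apply _ hA]
    refine setLIntegral_mono (measurable_gaussDensE y _ _) fun z hz => ?_
    apply ENNReal.ofReal_le_ofReal
    have hzH := hAH hz
    rw [hH_def] at hzH
    simp only [Set.mem_setOf_eq, Set.mem_Ici] at hzH
    have hk := hkey z
    have hle2 : ‖z - y‖ ^ 2 ≤ ‖z - x‖ ^ 2 := by nlinarith [hnorm]
    have hexp : Real.exp (-‖z - x‖ ^ 2 / (2 * σ ^ 2))
        ≤ Real.exp (-‖z - y‖ ^ 2 / (2 * σ ^ 2)) := by
      apply Real.exp_le_exp.mpr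
      apply div_le_div_of_nonneg_right (neg_le_neg hle2) (by positivity) |>.trans_eq rfl
    exact mul_le_mul_of_nonneg_left hexp (by positivity)
  have hcmp2 : ∀ A : Set (EuclideanSpace ℝ (Fin d)), MeasurableSet A → A ⊆ Hᶜ → ν A ≤ μ A := by
    intro A hA hAH
    rw [hμ_def, hν_def, gaussianE_eq_withDensity x hv, gaussianE_eq_withDensity y hv,
      withDensity_apply _ hA, withDensity_apply _ hA]
    refine setLIntegral_mono (measurable_gaussDensE x _ _) fun z hz => ?_
    apply ENNReal.ofReal_le_ofReal
    have hzH := hAH hz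
    rw [hH_def] at hzH
    simp only [Set.mem_compl_iff, Set.mem_setOf_eq, Set.mem_Ici, not_le] at hzH
    have hk := hkey z
    have hle2 : ‖z - x‖ ^ 2 ≤ ‖z - y‖ ^ 2 := by nlinarith [hnorm]
    have hexp : Real.exp (-‖z - y‖ ^ 2 / (2 * σ ^ 2))
        ≤ Real.exp (-‖z - x‖ ^ 2 / (2 * σ ^ 2)) := by
      apply Real.exp_le_exp.mpr
      exact div_le_div_of_nonneg_right (neg_le_neg hle2) (by positivity)
    exact mul_le_mul_of_nonneg_left hexp (by positivity)
  -- measures of the halfspaces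
  have hμH : μ H = gaussianReal 0 (σ^2).toNNReal (Ici α) := by
    rw [hμ_def, hH_def]
    exact gaussianE_inner_apply x u hu hv measurableSet_Ici
  have hHc : Hᶜ = {z : EuclideanSpace ℝ (Fin d) | ⟪z - y, u⟫ ∈ Iio (-α)} := by
    rw [hH_def]
    ext z
    simp only [Set.mem_compl_iff, Set.mem_setOf_eq, Set.mem_Ici, Set.mem_Iio, not_le]
    have hzy : z - y = (z - x) - (y - x) := by abel
    have h2 : (⟪y - x, u⟫ : ℝ) = n := by
      rw [hu_def, real_inner_smul_right, real_inner_self_eq_norm_sq, ← hn]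
      field_simp
    have h1 : (⟪z - y, u⟫ : ℝ) = ⟪z - x, u⟫ - n := by
      rw [hzy, inner_sub_left, h2]
    rw [h1, hα_def]
    constructor <;> intro h <;> linarith
  have hνHc : ν Hᶜ = gaussianReal 0 (σ^2).toNNReal (Ici α) := by
    rw [hν_def, hHc, gaussianE_inner_apply y u hu hv measurableSet_Iio]
    exact gaussianReal_Iio_neg_eq_Ici hv' α
  -- the tail bound
  set T : ℝ := (gaussianReal 0 (σ^2).toNNReal (Ici α)).toReal with hT
  have hTlb : r / (r ^ 2 + 1) * ((Real.sqrt (2 * π))⁻¹ * Real.exp (-r ^ 2 / 2)) ≤ T := by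
    rw [hT, hα, gaussianReal_scaling hσ r]
    exact stdGaussian_tail_lb hrpos
  -- assemble
  rw [tvDist]
  haveI : Nonempty {s : Set (EuclideanSpace ℝ (Fin d)) // MeasurableSet s} :=
    ⟨⟨∅, MeasurableSet.empty⟩⟩
  apply ciSup_le
  rintro ⟨A, hA⟩
  have h1 := tv_bound_aux μ ν H hHmeas hcmp hcmp2 A hA
  have h2 := tv_bound_aux ν μ Hᶜ hHmeas.compl hcmp2
    (fun B hB hBH => hcmp B hB (by rwa [compl_compl] at hBH)) A hA
  rw [compl_compl] at h2
  have heq : (μ H).toReal + (ν Hᶜ).toReal = 2 * T := by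
    rw [hμH, hνHc, hT]; ring
  have hrhs : (2 * r / (r ^ 2 + 1)) * (1 / Real.sqrt (2 * Real.pi)) * Real.exp (-r ^ 2 / 2)
      = 2 * (r / (r ^ 2 + 1) * ((Real.sqrt (2 * π))⁻¹ * Real.exp (-r ^ 2 / 2))) := by
    rw [one_div]; ring
  rw [abs_sub_le_iff]
  constructor
  · calc (μ A).toReal - (ν A).toReal ≤ 1 - ((μ H).toReal + (ν Hᶜ).toReal) := h1
      _ = 1 - 2 * T := by rw [heq]
      _ ≤ 1 - (2 * r / (r ^ 2 + 1)) * (1 / Real.sqrt (2 * Real.pi)) * Real.exp (-r ^ 2 / 2) := by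
          rw [hrhs]; linarith
  · calc (ν A).toReal - (μ A).toReal ≤ 1 - ((ν Hᶜ).toReal + (μ H).toReal) := h2
      _ = 1 - 2 * T := by rw [add_comm, heq]
      _ ≤ 1 - (2 * r / (r ^ 2 + 1)) * (1 / Real.sqrt (2 * Real.pi)) * Real.exp (-r ^ 2 / 2) := by
          rw [hrhs]; linarith
end

section
/- Let a > 0, c ≥ 0, and T > 0. Then ∫₀^T (a / √(2π t³)) · exp(−(a + ct)²/(2t)) dt ≥ 2Q(a/√T) · e^{−ac − c²T/2}. -/
open MeasureTheory ProbabilityTheory Real Set intervalIntegral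

/-- Standard Gaussian tail probability `Q(r) = P(X ≥ r)` for `X ~ N(0,1)`. -/
noncomputable def gaussQ (r : ℝ) : ℝ :=
  ((gaussianReal 0 1) {x : ℝ | r ≤ x}).toReal

lemma gaussQ_eq (r : ℝ) : gaussQ r = ∫ x in Ici r, gaussianPDFReal 0 1 x := by
  have : {x : ℝ | r ≤ x} = Ici r := rfl
  rw [gaussQ, this, gaussianReal_apply_eq_integral 0 one_ne_zero,
    ENNReal.toReal_ofReal (setIntegral_nonneg measurableSet_Ici
      (fun x _ => gaussianPDFReal_nonneg 0 1 x))]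

lemma image_eq (a T : ℝ) (ha : 0 < a) (hT : 0 < T) :
    (fun t => a / Real.sqrt t) '' Ioc 0 T = Ici (a / Real.sqrt T) := by
  ext u
  constructor
  · rintro ⟨t, ⟨ht0, htT⟩, rfl⟩
    exact div_le_div_of_nonneg_left ha.le (Real.sqrt_pos.2 ht0)
      (Real.sqrt_le_sqrt htT)
  · intro hu
    have hu0 : 0 < u := lt_of_lt_of_le (div_pos ha (Real.sqrt_pos.2 hT)) hu
    refine ⟨a ^ 2 / u ^ 2, ⟨by positivity, ?_⟩, ?_⟩
    · rw [div_le_iff₀ (by positivity)]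
      have h1 : a / Real.sqrt T ≤ u := hu
      have h2 : a ≤ u * Real.sqrt T := by
        rwa [div_le_iff₀ (Real.sqrt_pos.2 hT)] at h1
      calc a ^ 2 ≤ (u * Real.sqrt T) ^ 2 := by
            apply pow_le_pow_left₀ ha.le h2
        _ = T * u ^ 2 := by
            rw [mul_pow, Real.sq_sqrt hT.le]; ring
    · have h : Real.sqrt (a ^ 2 / u ^ 2) = a / u := by
        rw [show a ^ 2 / u ^ 2 = (a / u) ^ 2 by ring, Real.sqrt_sq (by positivity)]
      simp only
      rw [h]
      field_simp

lemma hderiv (a T : ℝ) (ha : 0 < a) (hT : 0 < T) :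
    ∀ t ∈ Ioc (0:ℝ) T, HasDerivWithinAt (fun t => a / Real.sqrt t)
      (-a / (2 * t * Real.sqrt t)) (Ioc (0:ℝ) T) t := by
  intro t ht
  have h1 : HasDerivAt (fun t => a / Real.sqrt t)
      ((0 * Real.sqrt t - a * (1 / (2 * Real.sqrt t))) / (Real.sqrt t) ^ 2) t :=
    (hasDerivAt_const t a).div (Real.hasDerivAt_sqrt ht.1.ne') (Real.sqrt_ne_zero'.2 ht.1)
  have h2 : (0 * Real.sqrt t - a * (1 / (2 * Real.sqrt t))) / (Real.sqrt t) ^ 2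
      = -a / (2 * t * Real.sqrt t) := by
    have hs : Real.sqrt t > 0 := Real.sqrt_pos.2 ht.1
    rw [Real.sq_sqrt ht.1.le]
    field_simp
    ring
  exact (h2 ▸ h1).hasDerivWithinAt

lemma hinj (a T : ℝ) (ha : 0 < a) (hT : 0 < T) :
    InjOn (fun t => a / Real.sqrt t) (Ioc (0:ℝ) T) := by
  intro t1 h1 t2 h2 h
  simp only at h
  have hs1 : (0:ℝ) < Real.sqrt t1 := Real.sqrt_pos.2 h1.1
  have hs2 : (0:ℝ) < Real.sqrt t2 := Real.sqrt_pos.2 h2.1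
  have heq : Real.sqrt t1 = Real.sqrt t2 := by
    field_simp at h
    linarith
  calc t1 = Real.sqrt t1 ^ 2 := (Real.sq_sqrt h1.1.le).symm
    _ = Real.sqrt t2 ^ 2 := by rw [heq]
    _ = t2 := Real.sq_sqrt h2.1.le

lemma cov_base (a T : ℝ) (ha : 0 < a) (hT : 0 < T) :
    (∫ x in Ici (a / Real.sqrt T), gaussianPDFReal 0 1 x)
      = ∫ t in Ioc (0:ℝ) T,
          |(-a / (2 * t * Real.sqrt t))| • gaussianPDFReal 0 1 (a / Real.sqrt t) := by
  rw [← image_eq a T ha hT]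
  exact integral_image_eq_integral_abs_deriv_smul measurableSet_Ioc
    (hderiv a T ha hT) (hinj a T ha hT) _

lemma intg_base (a T : ℝ) (ha : 0 < a) (hT : 0 < T) :
    IntegrableOn (fun t => |(-a / (2 * t * Real.sqrt t))| • gaussianPDFReal 0 1 (a / Real.sqrt t))
      (Ioc (0:ℝ) T) := by
  rw [← integrableOn_image_iff_integrableOn_abs_deriv_smul measurableSet_Ioc
    (hderiv a T ha hT) (hinj a T ha hT)]
  exact (integrable_gaussianPDFReal 0 1).integrableOn

lemma point_eq (a : ℝ) (ha : 0 < a) {t : ℝ} (ht : 0 < t) :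
    |(-a / (2 * t * Real.sqrt t))| • gaussianPDFReal 0 1 (a / Real.sqrt t)
      = (a / Real.sqrt (2 * Real.pi * t ^ 3)) * Real.exp (-a ^ 2 / (2 * t)) / 2 := by
  have hs : (0:ℝ) < Real.sqrt t := Real.sqrt_pos.2 ht
  have habs : |(-a / (2 * t * Real.sqrt t))| = a / (2 * t * Real.sqrt t) := by
    rw [abs_div, abs_neg, abs_of_pos ha, abs_of_pos (by positivity)]
  have hsq : (a / Real.sqrt t) ^ 2 = a ^ 2 / t := by
    rw [div_pow, Real.sq_sqrt ht.le]
  have hst : Real.sqrt (2 * Real.pi * t ^ 3) = Real.sqrt (2 * Real.pi) * (t * Real.sqrt t) := by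
    rw [Real.sqrt_mul (by positivity), show t ^ 3 = (t * Real.sqrt t) ^ 2 by
      rw [mul_pow, Real.sq_sqrt ht.le]; ring, Real.sqrt_sq (by positivity)]
  rw [habs, gaussianPDFReal, hst]
  push_cast
  rw [smul_eq_mul]
  rw [show a / Real.sqrt t - 0 = a / Real.sqrt t by ring, hsq]
  rw [show -(a ^ 2 / t) / (2 * 1) = -a ^ 2 / (2 * t) by rw [mul_one]; field_simp]
  rw [show (2:ℝ) * Real.pi * 1 = 2 * Real.pi by ring]
  have h2pi : (0:ℝ) < Real.sqrt (2 * Real.pi) := Real.sqrt_pos.2 (by positivity)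
  field_simp

/-- Lower bound for the probability that a Brownian motion with drift `c` started at `a > 0`
hits `0` before time `T`:
`∫₀^T a·e^{−(a+ct)²/(2t)}/√(2πt³) dt ≥ 2Q(a/√T)·e^{−ac − c²T/2}`. -/
theorem integral_drifted_hitting_time_density_ge (a c T : ℝ)
    (ha : 0 < a) (hc : 0 ≤ c) (hT : 0 < T) :
    (∫ t in (0 : ℝ)..T,
        (a / Real.sqrt (2 * Real.pi * t ^ 3)) * Real.exp (-(a + c * t) ^ 2 / (2 * t))) ≥
      2 * gaussQ (a / Real.sqrt T) * Real.exp (-(a * c) - c ^ 2 * T / 2) := by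
  set B : ℝ → ℝ := fun t => (a / Real.sqrt (2 * Real.pi * t ^ 3)) * Real.exp (-a ^ 2 / (2 * t))
    with hB
  set D : ℝ → ℝ := fun t =>
    (a / Real.sqrt (2 * Real.pi * t ^ 3)) * Real.exp (-(a + c * t) ^ 2 / (2 * t)) with hD
  set K : ℝ := Real.exp (-(a * c) - c ^ 2 * T / 2) with hK
  have hK0 : 0 < K := Real.exp_pos _
  -- base integral equals 2 * gaussQ
  have hhalf : ∀ t ∈ Ioc (0:ℝ) T,
      |(-a / (2 * t * Real.sqrt t))| • gaussianPDFReal 0 1 (a / Real.sqrt t) = B t / 2 :=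
    fun t ht => point_eq a ha ht.1
  have hbase_eq : ∫ t in Ioc (0:ℝ) T, B t = 2 * gaussQ (a / Real.sqrt T) := by
    have h1 : gaussQ (a / Real.sqrt T) = ∫ t in Ioc (0:ℝ) T, B t / 2 := by
      rw [gaussQ_eq, cov_base a T ha hT]
      exact setIntegral_congr_fun measurableSet_Ioc hhalf
    rw [h1, MeasureTheory.integral_div]
    field_simp
  have hbase_int : IntegrableOn B (Ioc (0:ℝ) T) := by
    have h1 : IntegrableOn (fun t => B t / 2) (Ioc (0:ℝ) T) :=
      (intg_base a T ha hT).congr_fun hhalf measurableSet_Ioc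
    have h2 := h1.const_mul 2
    have h3 : (fun x => 2 * (B x / 2)) = B := by funext x; ring
    rwa [h3] at h2
  -- pointwise identity for the drifted integrand
  have hpoint : ∀ t ∈ Ioc (0:ℝ) T, D t = B t * Real.exp (-(a * c) - c ^ 2 * t / 2) := by
    intro t ht
    have ht0 : t ≠ 0 := ht.1.ne'
    have hexp : Real.exp (-(a + c * t) ^ 2 / (2 * t))
        = Real.exp (-a ^ 2 / (2 * t)) * Real.exp (-(a * c) - c ^ 2 * t / 2) := by
      rw [← Real.exp_add]
      congr 1
      field_simp
      ring
    rw [hD, hB]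
    simp only
    rw [hexp]
    ring
  -- pointwise lower bound
  have hge : ∀ t ∈ Ioc (0:ℝ) T, B t * K ≤ D t := by
    intro t ht
    rw [hpoint t ht]
    have hBnn : 0 ≤ B t := by
      rw [hB]; simp only; positivity
    apply mul_le_mul_of_nonneg_left _ hBnn
    apply Real.exp_le_exp.2
    have : c ^ 2 * t ≤ c ^ 2 * T := by nlinarith [ht.2, sq_nonneg c]
    linarith
  -- integrability of the drifted integrand
  have hD_int : IntegrableOn D (Ioc (0:ℝ) T) := by
    apply Integrable.mono' hbase_int
    · apply Measurable.aestronglyMeasurable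
      fun_prop
    · rw [ae_restrict_iff' measurableSet_Ioc]
      apply ae_of_all
      intro t ht
      rw [hpoint t ht, norm_mul]
      have hBnn : 0 ≤ B t := by rw [hB]; simp only; positivity
      rw [Real.norm_of_nonneg hBnn, Real.norm_of_nonneg (Real.exp_pos _).le]
      nth_rewrite 2 [← mul_one (B t)]
      apply mul_le_mul_of_nonneg_left _ hBnn
      rw [← Real.exp_zero]
      apply Real.exp_le_exp.2
      have h1 : 0 ≤ a * c := mul_nonneg ha.le hc
      have h2 : 0 ≤ c ^ 2 * t / 2 := div_nonneg (mul_nonneg (sq_nonneg c) ht.1.le) (by norm_num)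
      linarith
  rw [intervalIntegral.integral_of_le hT.le, ge_iff_le]
  calc 2 * gaussQ (a / Real.sqrt T) * K = (∫ t in Ioc (0:ℝ) T, B t) * K := by rw [hbase_eq]
    _ = ∫ t in Ioc (0:ℝ) T, B t * K := (MeasureTheory.integral_mul_const K _).symm
    _ ≤ ∫ t in Ioc (0:ℝ) T, D t := by
        apply setIntegral_mono_on (hbase_int.mul_const K) hD_int measurableSet_Ioc hge
    _ = _ := rfl
end
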